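/- If ρ : ℝ≥0 → ℝ≥0 satisfies ρ(x) ≤ C(1 + √(log(1+x))) for all x ≥ 0, where C, B, Q ≥ 0 are constants with Q > 0, then the series ∑_{n=0}^∞ log 2 / (2B + ρ(2^n Q)^2 + 1) diverges to infinity. -/
import Mathlib


open Real Filter

theorem stmt_0 (B C Q : ℝ) (ρ : ℝ → ℝ) (hB : 0 ≤ B) (hC : 0 ≤ C) (hQ : 0 < Q)
    (hρ_nonneg : ∀ x, 0 ≤ x → 0 ≤ ρ x)
    (hρ : ∀ x, 0 ≤ x → ρ x ≤ C * (1 + Real.sqrt (Real.log (1 + x)))) :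
    Tendsto (fun N : ℕ => ∑ n ∈ Finset.range N,
      Real.log 2 / (2 * B + (ρ (2 ^ n * Q)) ^ 2 + 1)) atTop atTop := by
  have hlog2 : 0 < Real.log 2 := Real.log_pos one_lt_two
  have hlogQ : 0 ≤ Real.log (1 + Q) := Real.log_nonneg (by linarith)
  set K : ℝ := 2 * B + 1 + 2 * C ^ 2 * (1 + Real.log 2 + Real.log (1 + Q)) with hK
  have hK0 : 0 < K := by nlinarith [sq_nonneg C]
  -- denominator bound
  have key : ∀ n : ℕ, Real.log 2 / K * (1 / (n + 1)) ≤
      Real.log 2 / (2 * B + (ρ (2 ^ n * Q)) ^ 2 + 1) := by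
    intro n
    have hx : (0:ℝ) ≤ 2 ^ n * Q := by positivity
    have hρx := hρ _ hx
    have hρx0 := hρ_nonneg _ hx
    have hL0 : 0 ≤ Real.log (1 + 2 ^ n * Q) := Real.log_nonneg (by linarith)
    set L := Real.log (1 + 2 ^ n * Q) with hLdef
    have hsq : Real.sqrt L ^ 2 = L := Real.sq_sqrt hL0
    have hs0 : 0 ≤ Real.sqrt L := Real.sqrt_nonneg _
    -- L ≤ n * log 2 + log (1+Q)
    have hLle : L ≤ n * Real.log 2 + Real.log (1 + Q) := by
      have h1 : (1:ℝ) + 2 ^ n * Q ≤ 2 ^ n * (1 + Q) := by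
        have : (1:ℝ) ≤ 2 ^ n := one_le_pow₀ (by norm_num)
        nlinarith
      have h2 : Real.log (1 + 2 ^ n * Q) ≤ Real.log (2 ^ n * (1 + Q)) :=
        Real.log_le_log (by linarith) h1
      calc L ≤ Real.log (2 ^ n * (1 + Q)) := h2
        _ = n * Real.log 2 + Real.log (1 + Q) := by
            rw [Real.log_mul (by positivity) (by linarith), Real.log_pow]
    -- ρ^2 bound
    have hρ2 : (ρ (2 ^ n * Q)) ^ 2 ≤ 2 * C ^ 2 * (1 + L) := by
      have h1 : (ρ (2 ^ n * Q)) ^ 2 ≤ (C * (1 + Real.sqrt L)) ^ 2 := by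
        apply sq_le_sq' <;> nlinarith
      have h2 : (C * (1 + Real.sqrt L)) ^ 2 ≤ 2 * C ^ 2 * (1 + L) := by
        have h3 : 2 * Real.sqrt L ≤ 1 + L := by nlinarith [sq_nonneg (Real.sqrt L - 1)]
        nlinarith [sq_nonneg C, sq_nonneg (Real.sqrt L)]
      linarith
    have hden : 2 * B + (ρ (2 ^ n * Q)) ^ 2 + 1 ≤ K * (n + 1) := by
      have hn0 : (0:ℝ) ≤ n := Nat.cast_nonneg n
      have : 2 * C ^ 2 * (1 + L) ≤ 2 * C ^ 2 * (1 + n * Real.log 2 + Real.log (1 + Q)) := by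
        nlinarith [sq_nonneg C]
      have e1 : 0 ≤ 2 * C ^ 2 * Real.log 2 * (n:ℝ) := by positivity
      have e2 : 0 ≤ (2 * B + 1 + 2 * C ^ 2 * (1 + Real.log (1 + Q))) * (n:ℝ) := by positivity
      nlinarith [sq_nonneg C]
    have hdpos : 0 < 2 * B + (ρ (2 ^ n * Q)) ^ 2 + 1 := by positivity
    have := div_le_div_of_nonneg_left hlog2.le hdpos hden
    calc Real.log 2 / K * (1 / (n + 1)) = Real.log 2 / (K * (n + 1)) := by
          field_simp
      _ ≤ _ := this
  have hbase : Tendsto (fun N : ℕ => Real.log 2 / K *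
      ∑ n ∈ Finset.range N, (1 : ℝ) / (n + 1)) atTop atTop := by
    apply Tendsto.const_mul_atTop (by positivity)
    exact tendsto_sum_range_one_div_nat_succ_atTop
  have hbase' : Tendsto (fun N : ℕ =>
      ∑ n ∈ Finset.range N, Real.log 2 / K * (1 / (n + 1))) atTop atTop := by
    simpa [Finset.mul_sum] using hbase
  exact tendsto_atTop_mono (fun N => Finset.sum_le_sum fun n _ => key n) hbase'
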